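/- arXiv:1803.05191 — 5 statements merged into one kernel-verified Lean document; each statement's English description precedes it below -/
import Mathlib

section
/- If a crossing c of an oriented virtual knot diagram D has sign sgn(c) and index Ind(c), then the crossing c' obtained by the crossing change operation satisfies sgn(c') = -sgn(c) and Ind(c') = -Ind(c); consequently, for every nonzero integer n the n-th dwrithe ∇J_n(D) = J_n(D) - J_{-n}(D) is unchanged under a crossing change. -/
/-- The `n`-th writhe: sum of signs of crossings with index `n`. -/
def Jw (M : Multiset (ℤ × ℤ)) (n : ℤ) : ℤ :=
  ((M.filter (fun p => p.2 = n)).map Prod.fst).sum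

/-- The `n`-th dwrithe `∇J_n = J_n - J_{-n}`. -/
def dw (M : Multiset (ℤ × ℤ)) (n : ℤ) : ℤ := Jw M n - Jw M (-n)

lemma Jw_add (M N : Multiset (ℤ × ℤ)) (n : ℤ) : Jw (M + N) n = Jw M n + Jw N n := by
  simp only [Jw, Multiset.filter_add, Multiset.map_add, Multiset.sum_add]

lemma Jw_singleton (s i n : ℤ) : Jw {(s, i)} n = if i = n then s else 0 := by
  rw [Jw, Multiset.filter_singleton]
  split_ifs <;> simp

lemma dw_add (M N : Multiset (ℤ × ℤ)) (n : ℤ) : dw (M + N) n = dw M n + dw N n := by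
  simp only [dw, Jw_add]
  ring

lemma dw_singleton_neg (s i n : ℤ) : dw {(-s, -i)} n = dw {(s, i)} n := by
  simp only [dw, Jw_singleton, neg_eq_iff_eq_neg, neg_neg]
  split_ifs <;> ring

lemma dw_cons_neg (s i : ℤ) (T : Multiset (ℤ × ℤ)) (n : ℤ) :
    dw ((-s, -i) ::ₘ T) n = dw ((s, i) ::ₘ T) n := by
  rw [← Multiset.singleton_add, ← Multiset.singleton_add, dw_add, dw_add, dw_singleton_neg]

theorem stmt0_general (M : Multiset (ℤ × ℤ)) (s i : ℤ)
    (hmem : (s, i) ∈ M)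
    (M' : Multiset (ℤ × ℤ)) (hM' : M' = (-s, -i) ::ₘ M.erase (s, i)) :
    ∀ n : ℤ, n ≠ 0 → dw M' n = dw M n := by
  intro n _
  rw [hM', dw_cons_neg, Multiset.cons_erase hmem]

/-- A crossing change replaces a crossing `(s, i)` by `(-s, -i)`: the new crossing
has sign `-s` and index `-i`, and for every nonzero `n` the `n`-th dwrithe is unchanged. -/
theorem stmt0 (M : Multiset (ℤ × ℤ)) (s i : ℤ) (hs : s = 1 ∨ s = -1)
    (hmem : (s, i) ∈ M)
    (M' : Multiset (ℤ × ℤ)) (hM' : M' = (-s, -i) ::ₘ M.erase (s, i)) :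
    ∀ n : ℤ, n ≠ 0 → dw M' n = dw M n :=
  stmt0_general M s i hmem M' hM'
end

section
/- Let D have crossing data {(sgn(c), Ind(c), ∇J_n(D_c))}_c and global dwrithe ∇J_n(D). Suppose the mirror image D* has corresponding data sgn(c*) = −sgn(c), Ind(c*) = −Ind(c), ∇J_n(D*_{c*}) = −∇J_n(D_c) and ∇J_n(D*) = ∇J_n(D). Then L^n_{D*}(t, ℓ) = −L^n_D(t^{−1}, ℓ). -/
noncomputable section

/-- The Laurent polynomial ring ℤ[t^{±1}, ℓ^{±1}], as the group algebra ℤ[ℤ²]. -/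
abbrev LP := AddMonoidAlgebra ℤ (ℤ × ℤ)

/-- The monomial `t^p ℓ^q`. -/
def mono (p q : ℤ) : LP := AddMonoidAlgebra.single (p, q) 1

/-- The additive monoid hom `(p, q) ↦ (-p, q)` on exponents. -/
def negT : (ℤ × ℤ) →+ (ℤ × ℤ) where
  toFun p := (-p.1, p.2)
  map_zero' := by simp
  map_add' := by intro a b; ext <;> simp <;> ring

/-- The ℤ[ℓ^{±1}]-algebra automorphism `t ↦ t⁻¹` of ℤ[t^{±1}, ℓ^{±1}] (as a ring hom). -/
def invT : LP →+* LP := AddMonoidAlgebra.mapDomainRingHom ℤ negT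

lemma invT_mono (p q : ℤ) : invT (mono p q) = mono (-p) q := by
  simp [invT, mono, AddMonoidAlgebra.mapDomainRingHom, negT]

lemma invT_zsmul_mono_sub_mono (s p q r : ℤ) :
    invT (s • (mono p q - mono 0 r)) = s • (mono (-p) q - mono 0 r) := by
  rw [map_zsmul, map_sub, invT_mono, invT_mono, neg_zero]

theorem stmt7_general {α : Type} (C : Finset α) (sgn ind dJc : α → ℤ) (dJ : ℤ)
    (sgns inds dJcs : α → ℤ) (dJs : ℤ)
    (h1 : ∀ c ∈ C, sgns c = -sgn c) (h2 : ∀ c ∈ C, inds c = -ind c)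
    (h3 : ∀ c ∈ C, dJcs c = -dJc c) (h4 : dJs = dJ) :
    ∑ c ∈ C, sgns c • (mono (inds c) |dJcs c| - mono 0 |dJs|)
      = - invT (∑ c ∈ C, sgn c • (mono (ind c) |dJc c| - mono 0 |dJ|)) := by
  rw [map_sum, ← Finset.sum_neg_distrib]
  refine Finset.sum_congr rfl fun c hc ↦ ?_
  rw [h1 c hc, h2 c hc, h3 c hc, h4, invT_zsmul_mono_sub_mono, abs_neg, neg_smul]

/-- Under mirror image (sgn ↦ -sgn, Ind ↦ -Ind, ∇J_n(D_c) ↦ -∇J_n(D_c),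
∇J_n(D) unchanged), the L-polynomial satisfies L^n_{D*}(t, ℓ) = -L^n_D(t⁻¹, ℓ). -/
theorem stmt7 {α : Type} (C : Finset α) (sgn ind dJc : α → ℤ) (dJ : ℤ)
    (sgns inds dJcs : α → ℤ) (dJs : ℤ)
    (hsgn : ∀ c ∈ C, sgn c = 1 ∨ sgn c = -1)
    (h1 : ∀ c ∈ C, sgns c = -sgn c) (h2 : ∀ c ∈ C, inds c = -ind c)
    (h3 : ∀ c ∈ C, dJcs c = -dJc c) (h4 : dJs = dJ) :
    ∑ c ∈ C, sgns c • (mono (inds c) |dJcs c| - mono 0 |dJs|)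
      = - invT (∑ c ∈ C, sgn c • (mono (ind c) |dJc c| - mono 0 |dJ|)) :=
  stmt7_general C sgn ind dJc dJ sgns inds dJcs dJs h1 h2 h3 h4
end
end

section
/- Let D have crossing data {(sgn(c), Ind(c), ∇J_n(D_c))}_c and global dwrithe ∇J_n(D). Suppose the reversed diagram D⁻ has data sgn(c⁻) = sgn(c), Ind(c⁻) = −Ind(c), ∇J_n(D⁻_{c⁻}) = ∇J_n(D_c) and ∇J_n(D⁻) = −∇J_n(D). Then L^n_{D⁻}(t, ℓ) = L^n_D(t^{−1}, ℓ). -/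
noncomputable section

theorem stmt8_general {α : Type} (C : Finset α) (sgn ind dJc : α → ℤ) (dJ : ℤ)
    (sgnr indr dJcr : α → ℤ) (dJr : ℤ)
    (h1 : ∀ c ∈ C, sgnr c = sgn c) (h2 : ∀ c ∈ C, indr c = -ind c)
    (h3 : ∀ c ∈ C, dJcr c = dJc c) (h4 : dJr = -dJ) :
    ∑ c ∈ C, sgnr c • (mono (indr c) |dJcr c| - mono 0 |dJr|)
      = invT (∑ c ∈ C, sgn c • (mono (ind c) |dJc c| - mono 0 |dJ|)) := by
  rw [map_sum]
  refine Finset.sum_congr rfl fun c hc => ?_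
  rw [h1 c hc, h2 c hc, h3 c hc, h4, abs_neg, map_zsmul, map_sub, invT_mono, invT_mono, neg_zero]

/-- Under orientation reversal (sgn unchanged, Ind ↦ -Ind, ∇J_n(D_c) unchanged,
∇J_n(D) ↦ -∇J_n(D)), the L-polynomial satisfies L^n_{D⁻}(t, ℓ) = L^n_D(t⁻¹, ℓ). -/
theorem stmt8 {α : Type} (C : Finset α) (sgn ind dJc : α → ℤ) (dJ : ℤ)
    (sgnr indr dJcr : α → ℤ) (dJr : ℤ)
    (hsgn : ∀ c ∈ C, sgn c = 1 ∨ sgn c = -1)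
    (h1 : ∀ c ∈ C, sgnr c = sgn c) (h2 : ∀ c ∈ C, indr c = -ind c)
    (h3 : ∀ c ∈ C, dJcr c = dJc c) (h4 : dJr = -dJ) :
    ∑ c ∈ C, sgnr c • (mono (indr c) |dJcr c| - mono 0 |dJr|)
      = invT (∑ c ∈ C, sgn c • (mono (ind c) |dJc c| - mono 0 |dJ|)) :=
  stmt8_general C sgn ind dJc dJ sgnr indr dJcr dJr h1 h2 h3 h4
end
end

section
/- Let D be a diagram, c a crossing of D, and D' the diagram obtained by a crossing change at c with corresponding crossing c'. Assume sgn(c') = −sgn(c), Ind(c') = −Ind(c), ∇J_n(D'_{c'}) = −∇J_n(D_c), ∇J_n(D') = ∇J_n(D), and the data at all other crossings is unchanged. Then L^n_{D'}(t, ℓ) − L^n_D(t, ℓ) = sgn(c)·(2ℓ^{|∇J_n(D)|} − (t^{Ind(c)} + t^{−Ind(c)}) ℓ^{|∇J_n(D_c)|}). -/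
noncomputable section

theorem Finset.sum_sub_sum_eq_of_eqOn_erase {α β : Type*} [DecidableEq α] [AddCommGroup β]
    {s : Finset α} {f g : α → β} {a : α} (ha : a ∈ s) (hfg : ∀ x ∈ s.erase a, f x = g x) :
    ∑ x ∈ s, f x - ∑ x ∈ s, g x = f a - g a := by
  rw [← add_sum_erase s f ha, ← add_sum_erase s g ha, sum_congr rfl hfg]
  abel

theorem neg_smul_sub_sub_smul_sub {R : Type*} [Ring R] (s : ℤ) (a b m : R) :
    (-s) • (b - m) - s • (a - m) = s • (2 * m - (a + b)) := by
  rw [two_mul]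
  module

theorem stmt9_general {α : Type} [DecidableEq α] (C : Finset α)
    (sgn ind dJc : α → ℤ) (dJ : ℤ) (c₀ : α) (hc₀ : c₀ ∈ C)
    (sgn' ind' dJc' : α → ℤ) (dJ' : ℤ)
    (h1 : sgn' = Function.update sgn c₀ (-sgn c₀))
    (h2 : ind' = Function.update ind c₀ (-ind c₀))
    (h3 : dJc' = Function.update dJc c₀ (-dJc c₀))
    (h4 : dJ' = dJ) :
    (∑ c ∈ C, sgn' c • (mono (ind' c) |dJc' c| - mono 0 |dJ'|))
      - (∑ c ∈ C, sgn c • (mono (ind c) |dJc c| - mono 0 |dJ|))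
      = sgn c₀ • ((2 : LP) * mono 0 |dJ|
          - (mono (ind c₀) |dJc c₀| + mono (-ind c₀) |dJc c₀|)) := by
  subst h1 h2 h3 h4
  have hother : ∀ c ∈ C.erase c₀,
      Function.update sgn c₀ (-sgn c₀) c • (mono (Function.update ind c₀ (-ind c₀) c)
          |Function.update dJc c₀ (-dJc c₀) c| - mono 0 |dJ'|)
        = sgn c • (mono (ind c) |dJc c| - mono 0 |dJ'|) := by
    intro c hc
    simp only [Function.update_of_ne (Finset.ne_of_mem_erase hc)]
  rw [Finset.sum_sub_sum_eq_of_eqOn_erase hc₀ hother]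
  simp only [Function.update_self, abs_neg]
  exact neg_smul_sub_sub_smul_sub _ _ _ _

/-- The crossing change formula: if D' is obtained from D by a crossing change at
c₀ (sgn, Ind, ∇J_n(D_c) negated at c₀, all other data and ∇J_n(D) unchanged), then
L^n_{D'} - L^n_D = sgn(c₀)(2ℓ^{|∇J_n(D)|} - (t^{Ind(c₀)} + t^{-Ind(c₀)})ℓ^{|∇J_n(D_{c₀})|}). -/
theorem stmt9 {α : Type} [DecidableEq α] (C : Finset α)
    (sgn ind dJc : α → ℤ) (dJ : ℤ) (c₀ : α) (hc₀ : c₀ ∈ C)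
    (hsgn : ∀ c ∈ C, sgn c = 1 ∨ sgn c = -1)
    (sgn' ind' dJc' : α → ℤ) (dJ' : ℤ)
    (h1 : sgn' = Function.update sgn c₀ (-sgn c₀))
    (h2 : ind' = Function.update ind c₀ (-ind c₀))
    (h3 : dJc' = Function.update dJc c₀ (-dJc c₀))
    (h4 : dJ' = dJ) :
    (∑ c ∈ C, sgn' c • (mono (ind' c) |dJc' c| - mono 0 |dJ'|))
      - (∑ c ∈ C, sgn c • (mono (ind c) |dJc c| - mono 0 |dJ|))
      = sgn c₀ • ((2 : LP) * mono 0 |dJ|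
          - (mono (ind c₀) |dJc c₀| + mono (-ind c₀) |dJc c₀|)) :=
  stmt9_general C sgn ind dJc dJ c₀ hc₀ sgn' ind' dJc' dJ' h1 h2 h3 h4
end
end

section
/- With notation as in the crossing-change formula, if Ind(c) ≠ 0, then L^n_{D'}(t, ℓ) ≠ L^n_D(t, ℓ); hence the crossing c is not cosmetic. -/
noncomputable section

/-! The coefficient of `t^i ℓ^b` in `2ℓ^a - (t^i + t^{-i})ℓ^b` is `-1` as soon as `i ≠ 0`: the
monomials `ℓ^a` and `t^{-i} ℓ^b` differ from `t^i ℓ^b` in their `t`-degree. So this difference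
never vanishes, and neither does its product with the unit `sgn(c) = ±1`. -/

theorem coeff_mono_apply (p q : ℤ) (x : ℤ × ℤ) :
    (mono p q).coeff x = if (p, q) = x then 1 else 0 :=
  Finsupp.single_apply

theorem coeff_two_mul_mono_sub_mono_add_mono {i : ℤ} (hi : i ≠ 0) (a b : ℤ) :
    ((2 : LP) * mono 0 a - (mono i b + mono (-i) b)).coeff (i, b) = -1 := by
  have hneg : -i ≠ i := fun h => hi (by omega)
  simp only [two_mul, AddMonoidAlgebra.coeff_sub, AddMonoidAlgebra.coeff_add, Finsupp.sub_apply,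
    Finsupp.add_apply, coeff_mono_apply, Prod.mk.injEq, hi.symm, hneg, false_and, and_true,
    if_true, if_false]
  norm_num

theorem two_mul_mono_sub_mono_add_mono_ne_zero {i : ℤ} (hi : i ≠ 0) (a b : ℤ) :
    (2 : LP) * mono 0 a - (mono i b + mono (-i) b) ≠ 0 := fun h => by
  simpa [h] using coeff_two_mul_mono_sub_mono_add_mono hi a b

/-- If L^n_{D'} - L^n_D = sgn(c)(2ℓ^{|∇J_n(D)|} - (t^{Ind(c)} + t^{-Ind(c)})ℓ^{|∇J_n(D_c)|})
and Ind(c) ≠ 0, then L^n_{D'} ≠ L^n_D; hence c is not a cosmetic crossing. -/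
theorem stmt10 (L L' : LP) (s i p q : ℤ) (hs : s = 1 ∨ s = -1)
    (hdiff : L' - L = s • ((2 : LP) * mono 0 |p| - (mono i |q| + mono (-i) |q|)))
    (hi : i ≠ 0) :
    L' ≠ L := by
  rintro rfl
  rw [sub_self, eq_comm, (Int.isUnit_iff.mpr hs).smul_eq_zero] at hdiff
  exact two_mul_mono_sub_mono_add_mono_ne_zero hi _ _ hdiff
end
end
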